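/- Let U and V be jointly distributed random variables on finite sets. There exists a random variable W (on some finite set) such that (1) U − V − W form a Markov chain, (2) U and W are independent, and (3) V and W are not independent, if and only if U is weakly independent of V, i.e., the rows of the stochastic matrix [p_{U|V}(u|v)]_{v,u} are linearly dependent. -/

import Mathlib

open scoped BigOperators

namespace MDC

structure FinProb (Ω : Type*) [Fintype Ω] where
  μ : Ω → ℝ
  nonneg : ∀ ω, 0 ≤ μ ω
  sum_one : ∑ ω, μ ω = 1

variable {Ω : Type*} [Fintype Ω]

/-- Probability that the random variable `f` takes the value `a`. -/
noncomputable def pr (P : FinProb Ω) {A : Type*} [DecidableEq A] (f : Ω → A) (a : A) : ℝ :=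
  ∑ ω, if f ω = a then P.μ ω else 0

/-- Shannon entropy (base 2) of a finite random variable. -/
noncomputable def H (P : FinProb Ω) {A : Type*} [Fintype A] [DecidableEq A] (f : Ω → A) : ℝ :=
  - ∑ a, pr P f a * Real.logb 2 (pr P f a)

/-- Conditional entropy H(f|g). -/
noncomputable def Hcond (P : FinProb Ω) {A B : Type*} [Fintype A] [DecidableEq A]
    [Fintype B] [DecidableEq B] (f : Ω → A) (g : Ω → B) : ℝ :=
  H P (fun ω => (f ω, g ω)) - H P g

/-- Mutual information I(f;g). -/
noncomputable def MI (P : FinProb Ω) {A B : Type*} [Fintype A] [DecidableEq A]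
    [Fintype B] [DecidableEq B] (f : Ω → A) (g : Ω → B) : ℝ :=
  H P f + H P g - H P (fun ω => (f ω, g ω))

/-- Conditional mutual information I(f;g|h). -/
noncomputable def CMI (P : FinProb Ω) {A B C : Type*} [Fintype A] [DecidableEq A]
    [Fintype B] [DecidableEq B] [Fintype C] [DecidableEq C]
    (f : Ω → A) (g : Ω → B) (h : Ω → C) : ℝ :=
  H P (fun ω => (f ω, h ω)) + H P (fun ω => (g ω, h ω))
    - H P (fun ω => (f ω, g ω, h ω)) - H P h

/-- Independence of two finite random variables. -/
def Indep (P : FinProb Ω) {A B : Type*} [DecidableEq A] [DecidableEq B]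
    (f : Ω → A) (g : Ω → B) : Prop :=
  ∀ a b, pr P (fun ω => (f ω, g ω)) (a, b) = pr P f a * pr P g b

/-- Conditional independence of `f` and `g` given `h` (a Markov chain f − h − g). -/
def CondIndep (P : FinProb Ω) {A B C : Type*} [DecidableEq A] [DecidableEq B] [DecidableEq C]
    (f : Ω → A) (g : Ω → B) (h : Ω → C) : Prop :=
  ∀ a b c, pr P h c * pr P (fun ω => (f ω, g ω, h ω)) (a, b, c) =
    pr P (fun ω => (f ω, h ω)) (a, c) * pr P (fun ω => (g ω, h ω)) (b, c)

/-- Binary entropy function. -/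
noncomputable def Hb (p : ℝ) : ℝ := -(p * Real.logb 2 p) - (1 - p) * Real.logb 2 (1 - p)

/-- Expected Hamming distortion between two random variables. -/
noncomputable def Edist (P : FinProb Ω) {A : Type*} [DecidableEq A] (f g : Ω → A) : ℝ :=
  ∑ ω, P.μ ω * (if f ω = g ω then 0 else 1)

end MDC

/-!
If `U − V − W` is a Markov chain, then `P(U = u, W = w) = ∑ v, p(u, v) P(W = w | V = v)`. Hence for
each `w` the vector `d v = P(W = w | V = v) - P(W = w)` satisfies `∑ v, p(u, v) d v = 0` for all `u`
when `U ⊥ W`, while `V ⊥ W` says exactly that all these vectors vanish on the support of `V`.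
Writing `d v = g v / P(V = v)`, vectors `d` with `∑ v, p(u, v) d v = 0` are the same as linear
relations `∑ v, g v p(· | v) = 0` between the rows. Conversely, such a relation, rescaled so that
`|d| ≤ 1`, defines the binary channel `P(W = 0 | V = v) = (1 + d v) / 2`, under which `W` is a
fair coin independent of `U` but not of `V`.
-/

namespace MDC

variable {Ω Ω' A B C : Type*} [Fintype Ω] [Fintype Ω'] [DecidableEq A] [DecidableEq B]
  [DecidableEq C]

section pr

variable (P : FinProb Ω)

lemma pr_nonneg (f : Ω → A) (a : A) : 0 ≤ pr P f a :=
  Finset.sum_nonneg fun ω _ => by split_ifs <;> simp [P.nonneg ω]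

lemma sum_pr [Fintype A] (f : Ω → A) : ∑ a, pr P f a = 1 := by
  simp only [pr]
  rw [Finset.sum_comm]
  simp [P.sum_one]

lemma sum_pr_pair_left [Fintype A] (f : Ω → A) (g : Ω → B) (b : B) :
    ∑ a, pr P (fun ω => (f ω, g ω)) (a, b) = pr P g b := by
  unfold pr
  rw [Finset.sum_comm]
  refine Finset.sum_congr rfl fun ω _ => ?_
  by_cases h : g ω = b <;> simp [h]

lemma sum_pr_pair_right [Fintype B] (f : Ω → A) (g : Ω → B) (a : A) :
    ∑ b, pr P (fun ω => (f ω, g ω)) (a, b) = pr P f a := by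
  unfold pr
  rw [Finset.sum_comm]
  refine Finset.sum_congr rfl fun ω _ => ?_
  by_cases h : f ω = a <;> simp [h]

lemma sum_pr_triple_right [Fintype C] (f : Ω → A) (g : Ω → B) (h : Ω → C) (a : A) (b : B) :
    ∑ c, pr P (fun ω => (f ω, g ω, h ω)) (a, b, c) = pr P (fun ω => (f ω, g ω)) (a, b) := by
  unfold pr
  rw [Finset.sum_comm]
  refine Finset.sum_congr rfl fun ω _ => ?_
  by_cases hf : f ω = a <;> by_cases hg : g ω = b <;> simp [hf, hg]

lemma pr_pair_swap (f : Ω → A) (g : Ω → B) (a : A) (b : B) :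
    pr P (fun ω => (f ω, g ω)) (a, b) = pr P (fun ω => (g ω, f ω)) (b, a) := by
  simp only [pr, Prod.mk.injEq, and_comm]

lemma pr_pair_le_right (f : Ω → A) (g : Ω → B) (a : A) (b : B) :
    pr P (fun ω => (f ω, g ω)) (a, b) ≤ pr P g b :=
  Finset.sum_le_sum fun ω _ => by
    by_cases h : g ω = b <;> simp only [h, Prod.mk.injEq, and_true, and_false] <;>
      split_ifs <;> simp [P.nonneg ω]

lemma pr_pair_eq_zero (f : Ω → A) {g : Ω → B} {b : B} (hb : pr P g b = 0) (a : A) :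
    pr P (fun ω => (f ω, g ω)) (a, b) = 0 :=
  le_antisymm (hb ▸ pr_pair_le_right P f g a b) (pr_nonneg P _ _)

lemma pr_mul_pr_pair_div (f : Ω → A) (g : Ω → B) (a : A) (b : B) :
    pr P g b * (pr P (fun ω => (f ω, g ω)) (a, b) / pr P g b) =
      pr P (fun ω => (f ω, g ω)) (a, b) := by
  by_cases hb : pr P g b = 0
  · simp [hb, pr_pair_eq_zero P f hb]
  · exact mul_div_cancel₀ _ hb

variable {P} in
lemma CondIndep.pr_triple_eq {f : Ω → A} {h : Ω → C} {g : Ω → B} (hfhg : CondIndep P f h g)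
    (a : A) (c : C) (b : B) :
    pr P (fun ω => (f ω, h ω, g ω)) (a, c, b) =
      pr P (fun ω => (f ω, g ω)) (a, b) * (pr P (fun ω => (h ω, g ω)) (c, b) / pr P g b) := by
  by_cases hb : pr P g b = 0
  · simp [hb, pr_pair_eq_zero P f (pr_pair_eq_zero P h hb c)]
  · rw [mul_div_assoc', eq_div_iff hb]
    linarith [hfhg a c b]

end pr

def FinProb.comap (P : FinProb Ω) (e : Ω' ≃ Ω) : FinProb Ω' where
  μ := P.μ ∘ e
  nonneg ω := P.nonneg (e ω)
  sum_one := (Equiv.sum_comp e P.μ).trans P.sum_one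

section comap

variable (P : FinProb Ω) (e : Ω' ≃ Ω)

lemma pr_comap (f : Ω → A) (a : A) : pr (P.comap e) (f ∘ e) a = pr P f a :=
  Equiv.sum_comp e fun ω => if f ω = a then P.μ ω else 0

lemma indep_comap_iff (f : Ω → A) (g : Ω → B) :
    Indep (P.comap e) (f ∘ e) (g ∘ e) ↔ Indep P f g := by
  simp only [Indep, ← pr_comap P e]
  rfl

lemma condIndep_comap_iff (f : Ω → A) (g : Ω → B) (h : Ω → C) :
    CondIndep (P.comap e) (f ∘ e) (g ∘ e) (h ∘ e) ↔ CondIndep P f g h := by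
  simp only [CondIndep, ← pr_comap P e]
  rfl

end comap

def FinProb.withChannel {V W : Type*} [Fintype W] (P : FinProb Ω) (Y : Ω → V)
    (κ : V → W → ℝ) (hκ : ∀ v w, 0 ≤ κ v w) (hκ₁ : ∀ v, ∑ w, κ v w = 1) : FinProb (Ω × W) where
  μ x := P.μ x.1 * κ (Y x.1) x.2
  nonneg x := mul_nonneg (P.nonneg _) (hκ _ _)
  sum_one := by simp [Fintype.sum_prod_type, ← Finset.mul_sum, hκ₁, P.sum_one]

section withChannel

variable {V W : Type*} [Fintype W] (P : FinProb Ω) (Y : Ω → V) (κ : V → W → ℝ)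
  (hκ : ∀ v w, 0 ≤ κ v w) (hκ₁ : ∀ v, ∑ w, κ v w = 1)

lemma pr_withChannel_fst (f : Ω → A) (a : A) :
    pr (P.withChannel Y κ hκ hκ₁) (fun x => f x.1) a = pr P f a := by
  simp only [pr, FinProb.withChannel, Fintype.sum_prod_type]
  refine Finset.sum_congr rfl fun ω _ => ?_
  split_ifs <;> simp [← Finset.mul_sum, hκ₁]

variable [DecidableEq V] [DecidableEq W]

lemma pr_withChannel_triple (f : Ω → A) (a : A) (w : W) (v : V) :
    pr (P.withChannel Y κ hκ hκ₁) (fun x => (f x.1, x.2, Y x.1)) (a, w, v) =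
      pr P (fun ω => (f ω, Y ω)) (a, v) * κ v w := by
  simp only [pr, FinProb.withChannel, Fintype.sum_prod_type, Finset.sum_mul]
  refine Finset.sum_congr rfl fun ω _ => ?_
  by_cases hf : f ω = a <;> by_cases hY : Y ω = v <;> simp [hf, hY]

lemma pr_withChannel_snd_fst (w : W) (v : V) :
    pr (P.withChannel Y κ hκ hκ₁) (fun x => (x.2, Y x.1)) (w, v) = pr P Y v * κ v w := by
  simp only [pr, FinProb.withChannel, Fintype.sum_prod_type, Finset.sum_mul]
  refine Finset.sum_congr rfl fun ω _ => ?_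
  by_cases hY : Y ω = v <;> simp [hY]

lemma condIndep_withChannel (f : Ω → A) :
    CondIndep (P.withChannel Y κ hκ hκ₁) (fun x => f x.1) Prod.snd (fun x => Y x.1) := by
  intro a w v
  rw [pr_withChannel_triple, pr_withChannel_snd_fst, pr_withChannel_fst,
    pr_withChannel_fst P Y κ hκ hκ₁ (fun ω => (f ω, Y ω))]
  ring

variable [Fintype V]

lemma pr_withChannel_fst_snd (f : Ω → A) (a : A) (w : W) :
    pr (P.withChannel Y κ hκ hκ₁) (fun x => (f x.1, x.2)) (a, w) =
      ∑ v, pr P (fun ω => (f ω, Y ω)) (a, v) * κ v w := by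
  rw [← sum_pr_triple_right _ _ _ fun x => Y x.1]
  simp only [pr_withChannel_triple]

lemma pr_withChannel_snd (w : W) :
    pr (P.withChannel Y κ hκ hκ₁) Prod.snd w = ∑ v, pr P Y v * κ v w := by
  rw [← sum_pr_pair_right _ Prod.snd fun x => Y x.1]
  simp only [pr_withChannel_snd_fst]

end withChannel

lemma exists_pos_forall_abs_mul_le_one {ι : Type*} [Fintype ι] (d : ι → ℝ) :
    ∃ ε > 0, ∀ i, |ε * d i| ≤ 1 := by
  refine ⟨(‖d‖ + 1)⁻¹, by positivity, fun i => ?_⟩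
  have hi : |d i| ≤ ‖d‖ := norm_le_pi_norm d i
  rw [abs_mul, abs_of_pos (by positivity), inv_mul_le_iff₀ (by positivity)]
  linarith

section binaryChannel

variable {V : Type*} (t : V → ℝ)

noncomputable def binaryChannel (v : V) (w : Fin 2) : ℝ := (1 + if w = 0 then t v else -t v) / 2

lemma binaryChannel_nonneg (ht : ∀ v, |t v| ≤ 1) (v : V) (w : Fin 2) :
    0 ≤ binaryChannel t v w := by
  have := abs_le.1 (ht v)
  unfold binaryChannel
  split_ifs <;> linarith

lemma sum_binaryChannel (v : V) : ∑ w, binaryChannel t v w = 1 := by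
  rw [Fin.sum_univ_two, binaryChannel, binaryChannel, if_pos rfl, if_neg one_ne_zero]
  ring

lemma sum_mul_binaryChannel [Fintype V] (a : V → ℝ) (ha : ∑ v, a v * t v = 0) (w : Fin 2) :
    ∑ v, a v * binaryChannel t v w = (∑ v, a v) / 2 := by
  simp only [binaryChannel, mul_div_assoc', ← Finset.sum_div]
  split_ifs <;> simp [mul_add, Finset.sum_add_distrib, ha]

end binaryChannel

lemma sum_subtype_ne_zero_eq_sum {ι : Type*} [Fintype ι] (q F : ι → ℝ)
    (hF : ∀ i, q i = 0 → F i = 0) : ∑ i : {i // q i ≠ 0}, F i = ∑ i, F i := by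
  rw [← Finset.sum_subtype {i | q i ≠ 0} (by simp) F]
  exact Finset.sum_filter_of_ne fun i _ hi => mt (hF i) hi

section WeakIndependence

variable {U V W : Type*} [DecidableEq U] [Fintype V] [DecidableEq V] [DecidableEq W]

theorem not_linearIndependent_condPMF_iff (P : FinProb Ω) (X : Ω → U) (Y : Ω → V) :
    ¬ LinearIndependent ℝ (fun v : {v : V // pr P Y v ≠ 0} =>
        fun u : U => pr P (fun ω => (X ω, Y ω)) (u, v.1) / pr P Y v.1) ↔
      ∃ d : V → ℝ, (∀ u, ∑ v, pr P (fun ω => (X ω, Y ω)) (u, v) * d v = 0) ∧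
        ∃ v, pr P Y v * d v ≠ 0 := by
  rw [Fintype.not_linearIndependent_iff]
  simp only [funext_iff, Finset.sum_apply, Pi.smul_apply, smul_eq_mul, Pi.zero_apply]
  constructor
  · rintro ⟨g, hg, v₀, hv₀⟩
    refine ⟨fun v => if h : pr P Y v ≠ 0 then g ⟨v, h⟩ / pr P Y v else 0, fun u => ?_,
      v₀, by simpa [v₀.2] using hv₀⟩
    rw [← sum_subtype_ne_zero_eq_sum (pr P Y) _ fun v hv => by simp [hv]]
    refine Eq.trans (Finset.sum_congr rfl fun v _ => ?_) (hg u)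
    simp only [ne_eq, v.2, not_false_eq_true, dite_true]
    ring
  · rintro ⟨d, hd, v₀, hv₀⟩
    refine ⟨fun v => pr P Y v * d v, fun u => ?_, ⟨v₀, left_ne_zero_of_mul hv₀⟩, hv₀⟩
    calc ∑ v : {v // pr P Y v ≠ 0},
          pr P Y v * d v * (pr P (fun ω => (X ω, Y ω)) (u, v) / pr P Y v)
        = ∑ v : {v // pr P Y v ≠ 0}, pr P (fun ω => (X ω, Y ω)) (u, v) * d v :=
          Finset.sum_congr rfl fun v _ => by field_simp [v.2]
      _ = 0 := by
          rw [sum_subtype_ne_zero_eq_sum (pr P Y)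
            (fun v => pr P (fun ω => (X ω, Y ω)) (u, v) * d v)
            fun v hv => by simp [pr_pair_eq_zero P X hv]]
          exact hd u

theorem exists_annihilator_of_condIndep_of_indep (P : FinProb Ω) (X : Ω → U) (Y : Ω → V)
    (Z : Ω → W) (hM : CondIndep P X Z Y) (hI : Indep P X Z) (hN : ¬ Indep P Y Z) :
    ∃ d : V → ℝ, (∀ u, ∑ v, pr P (fun ω => (X ω, Y ω)) (u, v) * d v = 0) ∧
      ∃ v, pr P Y v * d v ≠ 0 := by
  obtain ⟨v, w, hvw⟩ : ∃ v w, pr P (fun ω => (Y ω, Z ω)) (v, w) ≠ pr P Y v * pr P Z w := by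
    simpa [Indep] using hN
  refine ⟨fun v' => pr P (fun ω => (Z ω, Y ω)) (w, v') / pr P Y v' - pr P Z w, fun u => ?_, v,
    by rwa [mul_sub, pr_mul_pr_pair_div, ← pr_pair_swap, sub_ne_zero]⟩
  calc ∑ v', pr P (fun ω => (X ω, Y ω)) (u, v') *
        (pr P (fun ω => (Z ω, Y ω)) (w, v') / pr P Y v' - pr P Z w)
      = ∑ v', pr P (fun ω => (X ω, Z ω, Y ω)) (u, w, v') - pr P X u * pr P Z w := by
        simp only [mul_sub, Finset.sum_sub_distrib, hM.pr_triple_eq, ← Finset.sum_mul,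
          sum_pr_pair_right]
    _ = 0 := by rw [sum_pr_triple_right, hI, sub_self]

theorem exists_condIndep_indep_not_indep_of_annihilator [Fintype U] (P : FinProb Ω) (X : Ω → U)
    (Y : Ω → V) (d : V → ℝ) (hd : ∀ u, ∑ v, pr P (fun ω => (X ω, Y ω)) (u, v) * d v = 0)
    (v₀ : V) (hv₀ : pr P Y v₀ * d v₀ ≠ 0) :
    ∃ Q : FinProb (Ω × Fin 2),
      (∀ u v, pr Q (fun x => (X x.1, Y x.1)) (u, v) = pr P (fun ω => (X ω, Y ω)) (u, v)) ∧
      CondIndep Q (fun x => X x.1) Prod.snd (fun x => Y x.1) ∧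
      Indep Q (fun x => X x.1) Prod.snd ∧ ¬ Indep Q (fun x => Y x.1) Prod.snd := by
  obtain ⟨ε, hε, hεd⟩ := exists_pos_forall_abs_mul_le_one d
  set t : V → ℝ := fun v => ε * d v
  have ht : ∀ u, ∑ v, pr P (fun ω => (X ω, Y ω)) (u, v) * t v = 0 := fun u => by
    simp only [t, mul_left_comm _ ε, ← Finset.mul_sum, hd, mul_zero]
  have hqt : ∑ v, pr P Y v * t v = 0 := by
    simp only [← sum_pr_pair_left P X Y, Finset.sum_mul]
    rw [Finset.sum_comm]
    simp only [ht, Finset.sum_const_zero]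
  refine ⟨P.withChannel Y (binaryChannel t) (binaryChannel_nonneg t hεd) (sum_binaryChannel t),
    fun u v => pr_withChannel_fst P Y _ _ _ (fun ω => (X ω, Y ω)) (u, v),
    condIndep_withChannel P Y _ _ _ X,
    fun u w => ?_, fun h => hv₀ ?_⟩
  · rw [pr_withChannel_fst_snd, pr_withChannel_snd, pr_withChannel_fst,
      sum_mul_binaryChannel t _ (ht u), sum_mul_binaryChannel t _ hqt, sum_pr_pair_right, sum_pr]
    ring
  · have h0 := h v₀ 0
    rw [pr_pair_swap, pr_withChannel_snd_fst, pr_withChannel_fst, pr_withChannel_snd,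
      sum_mul_binaryChannel t _ hqt, sum_pr, binaryChannel, if_pos rfl] at h0
    have : ε * (pr P Y v₀ * d v₀) = 0 := by linarith
    exact (mul_eq_zero.1 this).resolve_left hε.ne'

end WeakIndependence

end MDC

open MDC

/-- Berger–Yeung weak independence characterization. -/
theorem stmt9 {Ω U V : Type} [Fintype Ω] [Fintype U] [DecidableEq U]
    [Fintype V] [DecidableEq V] (P : FinProb Ω) (Ur : Ω → U) (Vr : Ω → V) :
    (∃ (n m : ℕ) (P' : FinProb (Fin n)) (U' : Fin n → U) (V' : Fin n → V)
        (W' : Fin n → Fin m),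
      (∀ u v, pr P' (fun ω => (U' ω, V' ω)) (u, v)
        = pr P (fun ω => (Ur ω, Vr ω)) (u, v)) ∧
      CondIndep P' U' W' V' ∧ Indep P' U' W' ∧ ¬ Indep P' V' W') ↔
    ¬ LinearIndependent ℝ
      (fun v : {v : V // pr P Vr v ≠ 0} =>
        fun u : U => pr P (fun ω => (Ur ω, Vr ω)) (u, v.1) / pr P Vr v.1) := by
  rw [not_linearIndependent_condPMF_iff]
  constructor
  · rintro ⟨n, m, P', U', V', W', hUV, hM, hI, hN⟩
    obtain ⟨d, hd, v, hv⟩ := exists_annihilator_of_condIndep_of_indep P' U' V' W' hM hI hN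
    have hV : pr P' V' v = pr P Vr v := by
      rw [← sum_pr_pair_left P' U' V', ← sum_pr_pair_left P Ur Vr]
      simp only [hUV]
    exact ⟨d, fun u => by simpa only [hUV] using hd u, v, hV ▸ hv⟩
  · rintro ⟨d, hd, v₀, hv₀⟩
    obtain ⟨Q, hUV, hM, hI, hN⟩ :=
      exists_condIndep_indep_not_indep_of_annihilator P Ur Vr d hd v₀ hv₀
    let e := (Fintype.equivFin (Ω × Fin 2)).symm
    exact ⟨_, 2, Q.comap e, (fun x : Ω × Fin 2 => Ur x.1) ∘ e, (fun x : Ω × Fin 2 => Vr x.1) ∘ e,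
      Prod.snd ∘ e,
      fun u v => (pr_comap Q e _ _).trans (hUV u v),
      (condIndep_comap_iff Q e _ _ _).2 hM, (indep_comap_iff Q e _ _).2 hI,
      mt (indep_comap_iff Q e _ _).1 hN⟩
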